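/- Let K: [0,1] → ℝ≥0 be Lipschitz with ∫₀¹ K = 1, and set α_N = 1/((N−1)(1−e_K(N))) where e_K(N) = ∫₀¹ K − (1/(N−1))∑_{s=1}^{N−1} K(s/(N−1)). If N > 2·Lip(K) + 1, then α_N ≤ 4·e^{Lip(K)/(N−1)}/(N−1). -/

import Mathlib

/-!
On each cell of the uniform partition of `[0, 1]` into `n = N - 1` pieces, a Lipschitz `K` exceeds
its value at the right endpoint by at most `L / n`. Summing over the cells gives
`1 = ∫₀¹ K ≤ S / n + L / n` for the right Riemann sum `S = ∑ K (s / n)`, so `S ≥ n - L > n / 2`.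
Since `n (1 - e_K(N)) = S`, this yields `α_N < 2 / n ≤ 4 exp (L / n) / n`.
-/

open MeasureTheory Finset

theorem intervalIntegral_le_mul_right_add_of_lipschitzOnWith {f : ℝ → ℝ} {L : NNReal} {a b : ℝ}
    (hab : a ≤ b) (hf : LipschitzOnWith L f (Set.Icc a b)) :
    ∫ x in a..b, f x ≤ (b - a) * (f b + L * (b - a)) := by
  have hb : b ∈ Set.Icc a b := ⟨hab, le_rfl⟩
  have hbound : ∀ x ∈ Set.Icc a b, f x ≤ f b + L * (b - a) := by
    intro x hx
    have hdist := hf.dist_le_mul x hx b hb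
    rw [Real.dist_eq, Real.dist_eq, abs_sub_comm x b, abs_of_nonneg (sub_nonneg.2 hx.2)] at hdist
    have hKx : (L : ℝ) * (b - x) ≤ L * (b - a) :=
      mul_le_mul_of_nonneg_left (by linarith [hx.1]) L.coe_nonneg
    linarith [le_abs_self (f x - f b)]
  have hint : IntervalIntegrable f volume a b :=
    (hf.continuousOn.mono (Set.uIcc_of_le hab).subset).intervalIntegrable
  calc ∫ x in a..b, f x ≤ ∫ _ in a..b, (f b + L * (b - a)) :=
        intervalIntegral.integral_mono_on hab hint intervalIntegrable_const hbound
    _ = (b - a) * (f b + L * (b - a)) := by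
        rw [intervalIntegral.integral_const, smul_eq_mul]

theorem intervalIntegral_le_rightRiemannSum_add_of_lipschitzOnWith {f : ℝ → ℝ} {L : NNReal}
    {a b : ℝ} (hab : a ≤ b) (hf : LipschitzOnWith L f (Set.Icc a b)) {n : ℕ} (hn : 0 < n) :
    ∫ x in a..b, f x ≤
      (b - a) / n * ∑ s ∈ Icc 1 n, f (a + s * ((b - a) / n)) + L * (b - a) ^ 2 / n := by
  set h := (b - a) / n with hh
  have hn' : (0 : ℝ) < n := by exact_mod_cast hn
  have h_nonneg : 0 ≤ h := div_nonneg (by linarith) hn'.le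
  have hnh : a + n * h = b := by rw [hh]; field_simp; ring
  have hstep : ∀ i : ℕ, a + i * h ≤ a + (i + 1 : ℕ) * h := fun i => by push_cast; linarith
  have hcell : ∀ i < n, Set.Icc (a + i * h) (a + (i + 1 : ℕ) * h) ⊆ Set.Icc a b := by
    intro i hi
    have : ((i + 1 : ℕ) : ℝ) * h ≤ n * h :=
      mul_le_mul_of_nonneg_right (by exact_mod_cast hi) h_nonneg
    exact Set.Icc_subset_Icc (by nlinarith [(i.cast_nonneg : (0 : ℝ) ≤ i)]) (by linarith)
  have hsplit := intervalIntegral.sum_integral_adjacent_intervals (μ := volume) (f := f)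
    (a := fun i : ℕ => a + i * h) (n := n) fun i hi =>
      (hf.mono (hcell i hi)).continuousOn.intervalIntegrable_of_Icc (hstep i)
  simp only [Nat.cast_zero, zero_mul, add_zero, hnh] at hsplit
  have hcells : ∀ i ∈ range n, ∫ x in a + i * h..a + (i + 1 : ℕ) * h, f x ≤
      h * (f (a + (i + 1 : ℕ) * h) + L * h) := by
    intro i hi
    have hlen : a + (i + 1 : ℕ) * h - (a + i * h) = h := by push_cast; ring
    simpa only [hlen] using intervalIntegral_le_mul_right_add_of_lipschitzOnWith
      (hstep i) (hf.mono (hcell i (mem_range.1 hi)))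
  have hreindex : ∑ i ∈ range n, f (a + (i + 1 : ℕ) * h) = ∑ s ∈ Icc 1 n, f (a + s * h) := by
    rw [← Finset.Ico_add_one_right_eq_Icc, sum_Ico_eq_sum_range, Nat.add_sub_cancel]
    exact sum_congr rfl fun i _ => by rw [add_comm 1 i]
  calc ∫ x in a..b, f x = ∑ i ∈ range n, ∫ x in a + i * h..a + (i + 1 : ℕ) * h, f x :=
        hsplit.symm
    _ ≤ ∑ i ∈ range n, h * (f (a + (i + 1 : ℕ) * h) + L * h) := sum_le_sum hcells
    _ = h * ∑ s ∈ Icc 1 n, f (a + s * h) + L * (b - a) ^ 2 / n := by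
        rw [← hreindex, ← mul_sum, sum_add_distrib, sum_const, card_range, nsmul_eq_mul, hh]
        field_simp

theorem alphaN_bound_general (K : ℝ → ℝ) (L : NNReal) (N : ℕ)
    (hK : LipschitzOnWith L K (Set.Icc 0 1))
    (hKint : (∫ x in (0:ℝ)..1, K x) = 1)
    (hN : (N : ℝ) > 2 * (L : ℝ) + 1) :
    (1 : ℝ) / (((N:ℝ) - 1) *
        (1 - (∫ x in (0:ℝ)..1, K x
          - (1 / ((N:ℝ) - 1)) * ∑ s ∈ Finset.Icc 1 (N - 1), K ((s : ℝ) / ((N:ℝ) - 1)))))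
      ≤ 4 * Real.exp ((L : ℝ) / ((N:ℝ) - 1)) / ((N:ℝ) - 1) := by
  obtain ⟨n, rfl⟩ : ∃ n, N = n + 1 := ⟨N - 1, by
    have : (1 : ℝ) < N := by linarith [L.coe_nonneg]
    have : 1 < N := by exact_mod_cast this
    omega⟩
  simp only [Nat.add_sub_cancel, Nat.cast_add, Nat.cast_one, add_sub_cancel_right] at hN ⊢
  have hn : (0 : ℝ) < n := by linarith [L.coe_nonneg]
  set S := ∑ s ∈ Icc 1 n, K ((s : ℝ) / n)
  have hriemann : 1 ≤ S / n + L / n := by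
    have := intervalIntegral_le_rightRiemannSum_add_of_lipschitzOnWith zero_le_one hK
      (Nat.cast_pos.1 hn)
    simpa [hKint, S, div_eq_inv_mul, mul_comm] using this
  have hS_gt : (n : ℝ) < 2 * S := by
    rw [← add_div, le_div_iff₀ hn] at hriemann
    linarith
  -- The binder of `∫` extends over the whole difference, so the integrand is `K x - S / n`.
  have hdenom : (n : ℝ) * (1 - ∫ x in (0:ℝ)..1, K x - 1 / n * S) = S := by
    rw [intervalIntegral.integral_sub (hK.continuousOn.intervalIntegrable_of_Icc zero_le_one)
      intervalIntegrable_const, hKint, intervalIntegral.integral_const, sub_zero, one_smul]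
    field_simp
    ring
  rw [hdenom, div_le_div_iff₀ (by linarith) hn]
  nlinarith [Real.one_le_exp (div_nonneg L.coe_nonneg hn.le)]

/-- If `N > 2·Lip(K) + 1`, then
`α_N = 1/((N−1)(1−e_K(N))) ≤ 4·exp(Lip(K)/(N−1))/(N−1)`. -/
theorem alphaN_bound (K : ℝ → ℝ) (L : NNReal) (N : ℕ)
    (hK : LipschitzOnWith L K (Set.Icc 0 1))
    (hKpos : ∀ x ∈ Set.Icc (0:ℝ) 1, 0 ≤ K x)
    (hKint : (∫ x in (0:ℝ)..1, K x) = 1)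
    (hN : (N : ℝ) > 2 * (L : ℝ) + 1) :
    (1 : ℝ) / (((N:ℝ) - 1) *
        (1 - (∫ x in (0:ℝ)..1, K x
          - (1 / ((N:ℝ) - 1)) * ∑ s ∈ Finset.Icc 1 (N - 1), K ((s : ℝ) / ((N:ℝ) - 1)))))
      ≤ 4 * Real.exp ((L : ℝ) / ((N:ℝ) - 1)) / ((N:ℝ) - 1) :=
  alphaN_bound_general K L N hK hKint hN
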